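/- arXiv:2206.15096 — 4 statements merged into one kernel-verified Lean document; each statement's English description precedes it below -/
import Mathlib

section
/- The mechanism DAVID-Q is ordinally strategy-proof: for every student i, every profile of sub-college rank-ordered lists submitted by the other students, and every set T ⊆ C of colleges whose disclosure sub-colleges i includes in her list, the outcome (college or ∅) that i receives from submitting the sub-college rank-ordered list that contains the regular sub-colleges of all colleges ordered according to her true strict preferences over colleges, with the disclosure sub-college c^{vid} placed immediately after c^r for each c ∈ T, is weakly preferred under her true preferences to her outcome from submitting any other rank-ordered list of the same set of sub-colleges in a different order. -/
open scoped Classical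

noncomputable section

/-- The college (entry of her rank-ordered list) to which student `i` currently proposes,
given that `p i` entries of her list have already rejected her.  `none` means she has
exhausted her list and proposes to no college. -/
def proposesTo {I C : Type} (R : I → List C) (p : I → ℕ) (i : I) : Option C :=
  (R i)[p i]?

/-- Student `i` is rejected in the current round: she proposes to some college `c` and at
least `S c` students proposing to `c` have strictly higher priority at `c` than `i`
(so `i` is not among the `S c` highest-priority applicants held by `c`). -/
def isRejected {I C : Type} [Fintype I] (S : C → ℕ) (R : I → List C)
    (prio : C → I → ℝ) (p : I → ℕ) (i : I) : Prop :=
  ∃ c, proposesTo R p i = some c ∧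
    S c ≤ (Finset.univ.filter
      (fun j : I => proposesTo R p j = some c ∧ prio c i < prio c j)).card

/-- One round of student-proposing deferred acceptance: every rejected student moves on
to the next entry of her rank-ordered list. -/
def daStep {I C : Type} [Fintype I] (S : C → ℕ) (R : I → List C)
    (prio : C → I → ℝ) (p : I → ℕ) : I → ℕ :=
  fun i => if isRejected S R prio p i then p i + 1 else p i

/-- Student-proposing deferred acceptance (SPDA): iterate the rejection rounds until a
fixed point is reached (which happens within `∑ i, ((R i).length + 1)` rounds, since every
non-terminal round strictly increases some student's pointer, each of which is bounded by
the length of her list).  The resulting matching sends student `i` to the college holding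
her at termination, or to `none` (unmatched) if she exhausted her list. -/
def SPDA {I C : Type} [Fintype I] (S : C → ℕ) (R : I → List C)
    (prio : C → I → ℝ) : I → Option C :=
  proposesTo R ((daStep S R prio)^[∑ i : I, ((R i).length + 1)] fun _ => 0)

/-! In DAVID-Q each college `c : C` is split into two sub-colleges, modelled as pairs
`(c, b) : C × Bool`: the regular sub-college `(c, false)` (priority = eligibility score,
capacity `Sr c`) and the disclosure sub-college `(c, true)` (priority = payoff,
capacity `Sd c`).  SPDA is run at the sub-college level and a student matched to a
sub-college of `c` is matched to `c`. -/

/-- Capacities of the sub-colleges. -/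
def subCap {C : Type} (Sr Sd : C → ℕ) : C × Bool → ℕ :=
  fun s => if s.2 then Sd s.1 else Sr s.1

/-- Priorities of the sub-colleges: the regular sub-college of `c` ranks student `j` by
the eligibility score `e j c`; the disclosure sub-college ranks `j` by the payoff
`w j c` (revealed after information disclosure). -/
def subPrio {I C : Type} (e w : I → C → ℝ) : C × Bool → I → ℝ :=
  fun s j => if s.2 then w j s.1 else e j s.1

/-- The sub-college rank-ordered list built from a list `L` of colleges and a set
`T` of colleges targeted with information disclosure: the regular sub-colleges appear
in the order of `L`, and for each `c ∈ T` the disclosure sub-college of `c` is placed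
immediately after its regular sub-college. -/
def subROL {C : Type} [DecidableEq C] (L : List C) (T : Finset C) : List (C × Bool) :=
  L.flatMap fun c => if c ∈ T then [(c, false), (c, true)] else [(c, false)]

/-- `L` is the rank-ordered list that lists all colleges in the order of the true strict
preferences represented by the injective utility function `u : Option C → ℝ`
(`u none` is the utility of being unmatched). -/
def IsTruthfulROL {C : Type} (u : Option C → ℝ) (L : List C) : Prop :=
  (∀ c : C, c ∈ L) ∧ L.Pairwise fun a b => u (some b) < u (some a)

/-! Student-proposing deferred acceptance is strategy-proof with respect to the order of a
rank-ordered list. By the blocking lemma of Gale and Sotomayor, if a student got an earlier entry of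
her true list by reporting another order, the matching produced by that report would be blocked by
some other student; her list is unchanged, so this contradicts the stability of deferred
acceptance under the report. The truthful sub-college list is weakly decreasing in true utility,
and reordering it cannot change whether she is matched, so an earlier entry means a weakly better
college. -/

open Finset

section FinsetCounting

variable {ι β : Type*}

theorem le_card_filter_card_filter_lt [LinearOrder β] {B : Finset ι} {f : ι → β}
    (hf : Set.InjOn f B) {n : ℕ} (hn : n ≤ #B) :
    n ≤ #{j ∈ B | #{m ∈ B | f j < f m} < n} := by
  set r : ι → ℕ := fun j => #{m ∈ B | f j < f m}
  show n ≤ #{j ∈ B | r j < n}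
  have hr_lt : ∀ j ∈ B, r j < #B := fun j hj =>
    card_lt_card (filter_ssubset.2 ⟨j, hj, lt_irrefl _⟩)
  have hr_anti : ∀ a ∈ B, ∀ b ∈ B, f a < f b → r b < r a := by
    intro a _ b hb hab
    refine card_lt_card ((ssubset_iff_of_subset fun m hm => ?_).2 ⟨b, ?_, ?_⟩)
    · simp only [mem_filter] at hm ⊢
      exact ⟨hm.1, hab.trans hm.2⟩
    · simp [hb, hab]
    · simp
  have hinj : Set.InjOn r ({j ∈ B | ¬ r j < n} : Finset ι) := by
    intro a ha b hb hab
    simp only [mem_coe, mem_filter] at ha hb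
    by_contra hne
    rcases lt_or_gt_of_ne (hf.ne ha.1 hb.1 hne) with h | h
    · exact (hr_anti a ha.1 b hb.1 h).ne hab.symm
    · exact (hr_anti b hb.1 a ha.1 h).ne hab
  have hbig : #{j ∈ B | ¬ r j < n} ≤ #(Ico n #B) :=
    card_le_card_of_injOn r (fun j hj => by
      simp only [mem_coe, mem_filter] at hj
      simpa using ⟨not_lt.1 hj.2, hr_lt j hj.1⟩) hinj
  have hsplit := card_filter_add_card_filter_not (s := B) (fun j => r j < n)
  simp only [Nat.card_Ico] at hbig
  omega

theorem card_filter_mem_le_of_card_fiber_le [Fintype ι] [DecidableEq β] {t : Finset β}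
    {f g : ι → β} (h : ∀ b ∈ t, #{x | f x = b} ≤ #{x | g x = b}) :
    #{x | f x ∈ t} ≤ #{x | g x ∈ t} := by
  rw [card_eq_sum_card_fiberwise (s := {x | f x ∈ t}) fun x hx => (mem_filter.1 hx).2,
    card_eq_sum_card_fiberwise (s := {x | g x ∈ t}) fun x hx => (mem_filter.1 hx).2]
  refine sum_le_sum fun b hb => ?_
  have hfiber (k : ι → β) :
      (univ.filter fun x => k x ∈ t ∧ k x = b) = univ.filter fun x => k x = b :=
    filter_congr fun x _ => and_iff_right_of_imp fun (hx : k x = b) => hx ▸ hb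
  simpa only [filter_filter, hfiber] using h b hb

theorem subset_of_card_le_of_sdiff_subset [DecidableEq ι] {s A B : Finset ι} (hsB : s ⊆ B)
    (hBA : #B ≤ #A) (hAB : A \ s ⊆ B \ s) : s ⊆ A := by
  have hA := card_sdiff_add_card_inter A s
  have hB := card_sdiff_add_card_inter B s
  rw [inter_eq_right.2 hsB] at hB
  have hAs : A ∩ s = s :=
    eq_of_subset_of_card_le inter_subset_right (by have := card_le_card hAB; omega)
  exact inter_eq_right.1 hAs

end FinsetCounting

section Rank

variable {α : Type*}

def rankIn (l : List α) : Option α → ℕ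
  | none => l.length
  | some a => l.idxOf a

theorem rankIn_of_getElem?_eq_some {l : List α} (hl : l.Nodup) {q : ℕ} {a : α}
    (h : l[q]? = some a) : rankIn l (some a) = q := by
  obtain ⟨hq, rfl⟩ := List.getElem?_eq_some_iff.1 h
  exact hl.idxOf_getElem q hq

theorem exists_eq_some_of_rankIn_lt_length {l : List α} {o : Option α}
    (h : rankIn l o < l.length) : ∃ a, o = some a ∧ l[rankIn l o]? = some a := by
  cases o with
  | none => exact absurd h (lt_irrefl _)
  | some a => exact ⟨a, rfl, List.getElem?_idxOf (List.idxOf_lt_length_iff.1 h)⟩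

theorem eq_some_of_rankIn_eq {l : List α} {o : Option α} {a : α} (ha : a ∈ l)
    (h : rankIn l o = rankIn l (some a)) : o = some a := by
  have hlt : rankIn l o < l.length := h ▸ List.idxOf_lt_length_iff.2 ha
  obtain ⟨b, rfl, -⟩ := exists_eq_some_of_rankIn_lt_length hlt
  exact congrArg some ((List.idxOf_inj (List.idxOf_lt_length_iff.1 hlt)).1 h)

theorem rel_of_rankIn_le {r : α → α → Prop} (hr : ∀ a, r a a) {l : List α} (hl : l.Pairwise r)
    {a b : α} (ha : a ∈ l) (hb : b ∈ l) (h : rankIn l (some a) ≤ rankIn l (some b)) : r a b := by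
  have ha' := List.idxOf_lt_length_iff.2 ha
  have hb' := List.idxOf_lt_length_iff.2 hb
  rcases h.lt_or_eq with hlt | heq
  · simpa only [List.getElem_idxOf] using List.pairwise_iff_getElem.1 hl _ _ ha' hb' hlt
  · exact (List.idxOf_inj ha).1 heq ▸ hr a

theorem le_of_rankIn_le_of_perm {β : Type*} [Preorder β] {v : Option α → β} {l l' : List α}
    (hperm : l'.Perm l) (hl : l.Pairwise fun a b => v (some b) ≤ v (some a))
    {o o' : Option α} (ho : ∀ a ∈ o, a ∈ l) (ho' : ∀ a ∈ o', a ∈ l')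
    (h : rankIn l o ≤ rankIn l o') (h' : rankIn l' o' ≤ rankIn l' o) : v o' ≤ v o := by
  cases o' with
  | none =>
    cases o with
    | none => exact le_rfl
    | some a =>
      have := List.idxOf_lt_length_iff.2 (hperm.mem_iff.2 (ho a rfl))
      exact absurd h' (not_le.2 this)
  | some b =>
    have hb : b ∈ l := hperm.mem_iff.1 (ho' b rfl)
    obtain ⟨a, rfl, -⟩ := exists_eq_some_of_rankIn_lt_length
      (h.trans_lt (List.idxOf_lt_length_iff.2 hb))
    exact rel_of_rankIn_le (r := fun a b => v (some b) ≤ v (some a)) (fun _ => le_rfl) hl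
      (ho a rfl) hb h

end Rank

namespace DeferredAcceptance

variable {I C : Type} [Fintype I] (S : C → ℕ) (R : I → List C) (prio : C → I → ℝ)

section Rounds

def numRounds : ℕ := ∑ i : I, ((R i).length + 1)

def ptr (t : ℕ) : I → ℕ := (daStep S R prio)^[t] fun _ => 0

def finalPtr : I → ℕ := ptr S R prio (numRounds R)

theorem ptr_succ (t : ℕ) : ptr S R prio (t + 1) = daStep S R prio (ptr S R prio t) :=
  Function.iterate_succ_apply' _ _ _

theorem ptr_succ_apply (t : ℕ) (j : I) :
    ptr S R prio (t + 1) j =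
      if isRejected S R prio (ptr S R prio t) j then ptr S R prio t j + 1
      else ptr S R prio t j := by
  rw [ptr_succ]; rfl

theorem ptr_le_ptr_succ (t : ℕ) (j : I) : ptr S R prio t j ≤ ptr S R prio (t + 1) j := by
  rw [ptr_succ_apply]; split_ifs <;> omega

theorem monotone_ptr (j : I) : Monotone fun t => ptr S R prio t j :=
  monotone_nat_of_le_succ (ptr_le_ptr_succ S R prio · j)

theorem ptr_le_length (t : ℕ) (j : I) : ptr S R prio t j ≤ (R j).length := by
  induction t with
  | zero => simp [ptr]
  | succ t ih =>
    rw [ptr_succ_apply]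
    split_ifs with hrej
    · obtain ⟨c, hc, -⟩ := hrej
      exact (List.getElem?_eq_some_iff.1 hc).1
    · exact ih

theorem finalPtr_le_length (j : I) : finalPtr S R prio j ≤ (R j).length :=
  ptr_le_length S R prio _ j

theorem ptr_eq_of_ptr_succ_eq {s t : ℕ} (hs : ptr S R prio (s + 1) = ptr S R prio s)
    (hst : s ≤ t) : ptr S R prio t = ptr S R prio s := by
  obtain ⟨m, rfl⟩ := Nat.exists_eq_add_of_le hst
  rw [ptr_succ] at hs
  rw [ptr, add_comm, Function.iterate_add_apply]
  exact Function.iterate_fixed hs m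

/-- Potential argument: until the pointers stop moving, every round advances the total pointer
sum, which is bounded by the total list length. -/
theorem daStep_finalPtr : daStep S R prio (finalPtr S R prio) = finalPtr S R prio := by
  have key : ∀ t, (∃ s < t, ptr S R prio (s + 1) = ptr S R prio s) ∨
      t ≤ ∑ j, ptr S R prio t j := by
    intro t
    induction t with
    | zero => simp
    | succ t ih =>
      by_cases hfix : ptr S R prio (t + 1) = ptr S R prio t
      · exact Or.inl ⟨t, t.lt_succ_self, hfix⟩
      rcases ih with ⟨s, hst, hs⟩ | ih
      · exact Or.inl ⟨s, hst.trans t.lt_succ_self, hs⟩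
      obtain ⟨j, hj⟩ := Function.ne_iff.1 hfix
      have hsum : ∑ j, ptr S R prio t j < ∑ j, ptr S R prio (t + 1) j :=
        sum_lt_sum (fun k _ => ptr_le_ptr_succ S R prio t k)
          ⟨j, mem_univ _, (ptr_le_ptr_succ S R prio t j).lt_of_ne (Ne.symm hj)⟩
      omega
  rw [finalPtr, ← ptr_succ]
  rcases key (numRounds R) with ⟨s, hs, hfix⟩ | hN
  · rw [ptr_eq_of_ptr_succ_eq S R prio hfix hs.le,
      ptr_eq_of_ptr_succ_eq S R prio hfix (hs.le.trans (numRounds R).le_succ)]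
  · have hlen : ∑ j, ptr S R prio (numRounds R) j ≤ ∑ j, (R j).length :=
      sum_le_sum fun j _ => ptr_le_length S R prio _ j
    have hrounds : numRounds R = ∑ j, (R j).length + Fintype.card I := by
      simp [numRounds, sum_add_distrib]
    have hI : IsEmpty I := by
      rw [← Fintype.card_eq_zero_iff]
      omega
    exact funext isEmptyElim

theorem not_isRejected_finalPtr (j : I) : ¬ isRejected S R prio (finalPtr S R prio) j := by
  intro hrej
  have := congrFun (daStep_finalPtr S R prio) j
  simp only [daStep, if_pos hrej] at this
  omega

theorem ptr_eq_finalPtr {t : ℕ} (ht : numRounds R ≤ t) : ptr S R prio t = finalPtr S R prio := by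
  obtain ⟨m, rfl⟩ := Nat.exists_eq_add_of_le ht
  rw [ptr, add_comm, Function.iterate_add_apply]
  exact Function.iterate_fixed (daStep_finalPtr S R prio) m

theorem ptr_le_finalPtr (t : ℕ) (j : I) : ptr S R prio t j ≤ finalPtr S R prio j := by
  rw [← ptr_eq_finalPtr S R prio (le_max_right t (numRounds R))]
  exact monotone_ptr S R prio j (le_max_left _ _)

theorem ptr_lt_finalPtr_of_isRejected {t : ℕ} {j : I}
    (hrej : isRejected S R prio (ptr S R prio t) j) : ptr S R prio t j < finalPtr S R prio j := by
  have := ptr_le_finalPtr S R prio (t + 1) j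
  rw [ptr_succ_apply, if_pos hrej] at this
  omega

/-- Pointers move one step at a time, so every position below the final one was occupied at some
round, and left because of a rejection. -/
theorem exists_isRejected_of_lt_finalPtr {j : I} {q : ℕ} (hq : q < finalPtr S R prio j) :
    ∃ t, ptr S R prio t j = q ∧ isRejected S R prio (ptr S R prio t) j := by
  have hex : ∃ t, q < ptr S R prio t j := ⟨_, hq⟩
  obtain ⟨t, ht⟩ : ∃ t, Nat.find hex = t + 1 := by
    refine Nat.exists_eq_succ_of_ne_zero fun h0 => ?_
    have := Nat.find_spec hex
    rw [h0] at this
    simp [ptr] at this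
  have hgt := Nat.find_spec hex
  have hle : ¬ q < ptr S R prio t j := Nat.find_min hex (by omega)
  rw [ht, ptr_succ_apply] at hgt
  split_ifs at hgt with hrej
  · exact ⟨t, by omega, hrej⟩
  · exact absurd hgt hle

theorem exists_ptr_eq_finalPtr (j : I) : ∃ t, ptr S R prio t j = finalPtr S R prio j :=
  ⟨_, rfl⟩

def arrival (j : I) : ℕ := Nat.find (exists_ptr_eq_finalPtr S R prio j)

theorem ptr_arrival (j : I) : ptr S R prio (arrival S R prio j) j = finalPtr S R prio j :=
  Nat.find_spec (exists_ptr_eq_finalPtr S R prio j)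

theorem lt_arrival_iff {t : ℕ} {j : I} :
    t < arrival S R prio j ↔ ptr S R prio t j < finalPtr S R prio j := by
  refine ⟨fun h => (ptr_le_finalPtr S R prio t j).lt_of_ne
    (Nat.find_min (exists_ptr_eq_finalPtr S R prio j) h), fun h => ?_⟩
  by_contra! hle
  have := monotone_ptr S R prio j hle
  simp only [ptr_arrival] at this
  omega

end Rounds

section Proposals

def proposersAbove (p : I → ℕ) (c : C) (x : ℝ) : Finset I :=
  univ.filter fun m => proposesTo R p m = some c ∧ x < prio c m

variable {S R prio}

theorem isRejected_iff {p : I → ℕ} {j : I} {c : C} (hp : proposesTo R p j = some c) :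
    isRejected S R prio p j ↔ S c ≤ #(proposersAbove R prio p c (prio c j)) := by
  refine ⟨fun ⟨c', hc', h⟩ => ?_, fun h => ⟨c, hp, h⟩⟩
  cases hp.symm.trans hc'
  exact h

theorem exists_isRejected_of_lt_card {c : C} (hprio : Function.Injective (prio c))
    {p : I → ℕ} {B : Finset I} (hB : ∀ m ∈ B, proposesTo R p m = some c) (hcard : S c < #B) :
    ∃ m ∈ B, isRejected S R prio p m := by
  obtain ⟨m, hm, hmin⟩ := B.exists_min_image (prio c) (card_pos.1 (by omega))
  refine ⟨m, hm, (isRejected_iff (hB m hm)).2 ?_⟩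
  calc S c ≤ #(B.erase m) := by rw [card_erase_of_mem hm]; omega
    _ ≤ _ := card_le_card fun k hk => by
      obtain ⟨hkm, hkB⟩ := mem_erase.1 hk
      exact mem_filter.2 ⟨mem_univ _, hB k hkB,
        (hmin k hkB).lt_of_ne fun h => hkm (hprio h).symm⟩

/-- The proposers above `x` that survive a round are those with fewer than `S c` proposers above
them, and there are at least `S c` of these. -/
theorem exists_subset_proposersAbove_daStep {c : C} (hprio : Function.Injective (prio c))
    {p : I → ℕ} {x : ℝ} (hfull : S c ≤ #(proposersAbove R prio p c x)) :
    ∃ K ⊆ proposersAbove R prio (daStep S R prio p) c x,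
      S c ≤ #K ∧ ∀ j ∈ K, daStep S R prio p j = p j := by
  set B := proposersAbove R prio p c x
  set K := {j ∈ B | #{m ∈ B | prio c j < prio c m} < S c}
  have hstay : ∀ j ∈ K, daStep S R prio p j = p j := by
    intro j hj
    obtain ⟨hjB, hjfew⟩ := mem_filter.1 hj
    obtain ⟨-, hjc, hxj⟩ := mem_filter.1 hjB
    refine if_neg fun hrej => ((isRejected_iff hjc).1 hrej).not_gt
      (hjfew.trans_le' (card_le_card fun m hm => ?_))
    obtain ⟨-, hmc, hjm⟩ := mem_filter.1 hm
    exact mem_filter.2 ⟨mem_filter.2 ⟨mem_univ _, hmc, hxj.trans hjm⟩, hjm⟩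
  refine ⟨K, fun j hj => ?_, le_card_filter_card_filter_lt hprio.injOn hfull, hstay⟩
  obtain ⟨-, hjc, hxj⟩ := mem_filter.1 (mem_filter.1 hj).1
  refine mem_filter.2 ⟨mem_univ _, ?_, hxj⟩
  simpa only [proposesTo, hstay j hj] using hjc

theorem le_card_proposersAbove_ptr {c : C} (hprio : Function.Injective (prio c)) {x : ℝ}
    {s t : ℕ} (hst : s ≤ t) (hfull : S c ≤ #(proposersAbove R prio (ptr S R prio s) c x)) :
    S c ≤ #(proposersAbove R prio (ptr S R prio t) c x) := by
  induction t, hst using Nat.le_induction with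
  | base => exact hfull
  | succ t _ ih =>
    obtain ⟨K, hK, hcard, -⟩ := exists_subset_proposersAbove_daStep hprio ih
    rw [ptr_succ]
    exact hcard.trans (card_le_card hK)

/-- Not being rejected, the newcomer `k` ranks above `x`, so she overfills `c` above `x`. -/
theorem exists_isRejected_of_newcomer {c : C} (hprio : Function.Injective (prio c))
    {p : I → ℕ} {k : I} {x : ℝ} (hfull : S c ≤ #(proposersAbove R prio p c x))
    (hk : proposesTo R (daStep S R prio p) k = some c) (hmoved : daStep S R prio p k ≠ p k)
    (hstay : ¬ isRejected S R prio (daStep S R prio p) k) :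
    ∃ m ∈ proposersAbove R prio (daStep S R prio p) c x,
      isRejected S R prio (daStep S R prio p) m := by
  obtain ⟨K, hK, hcard, hKstay⟩ := exists_subset_proposersAbove_daStep hprio hfull
  have hxk : x < prio c k := by
    by_contra! hkx
    refine hstay ((isRejected_iff hk).2 (hcard.trans (card_le_card fun m hm => ?_)))
    obtain ⟨-, hmc, hxm⟩ := mem_filter.1 (hK hm)
    exact mem_filter.2 ⟨mem_univ _, hmc, hkx.trans_lt hxm⟩
  have hkK : k ∉ K := fun h => hmoved (hKstay k h)
  refine exists_isRejected_of_lt_card hprio (fun m hm => (mem_filter.1 hm).2.1) ?_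
  calc S c < #(insert k K) := by rw [card_insert_of_notMem hkK]; omega
    _ ≤ _ := card_le_card (insert_subset (mem_filter.2 ⟨mem_univ _, hk, hxk⟩) hK)

variable (S R prio)

def matched (c : C) : Finset I := univ.filter fun m => SPDA S R prio m = some c

/-- `j` proposed to `c` during SPDA and was rejected. -/
def RejectedBy (j : I) (c : C) : Prop := ∃ q < finalPtr S R prio j, (R j)[q]? = some c

variable {S R prio}

theorem card_matched_le {c : C} (hprio : Function.Injective (prio c)) :
    #(matched S R prio c) ≤ S c := by
  by_contra! h
  obtain ⟨m, -, hm⟩ := exists_isRejected_of_lt_card (p := finalPtr S R prio) hprio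
    (fun m hm => (mem_filter.1 hm).2) h
  exact not_isRejected_finalPtr S R prio m hm

/-- Once `S c` proposers to `c` rank above `j`, they stay so; hence at the end `c` is filled by
exactly these students. -/
theorem proposersAbove_finalPtr_eq_matched {j : I} {c : C} (hprio : Function.Injective (prio c))
    (hj : RejectedBy S R prio j c) :
    proposersAbove R prio (finalPtr S R prio) c (prio c j) = matched S R prio c ∧
      #(matched S R prio c) = S c := by
  obtain ⟨q, hq, hqc⟩ := hj
  obtain ⟨t, rfl, hrej⟩ := exists_isRejected_of_lt_finalPtr S R prio hq
  have hfull : S c ≤ #(proposersAbove R prio (finalPtr S R prio) c (prio c j)) := by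
    rw [← ptr_eq_finalPtr S R prio (le_max_right t (numRounds R))]
    exact le_card_proposersAbove_ptr hprio (le_max_left _ _) ((isRejected_iff hqc).1 hrej)
  have hsub : proposersAbove R prio (finalPtr S R prio) c (prio c j) ⊆ matched S R prio c :=
    fun m hm => mem_filter.2 ⟨mem_univ _, (mem_filter.1 hm).2.1⟩
  have hle := card_matched_le (S := S) (R := R) hprio
  have hge := card_le_card hsub
  exact ⟨eq_of_subset_of_card_le hsub (by omega), by omega⟩

theorem card_matched_eq {j : I} {c : C} (hprio : Function.Injective (prio c))
    (hj : RejectedBy S R prio j c) : #(matched S R prio c) = S c :=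
  (proposersAbove_finalPtr_eq_matched hprio hj).2

theorem prio_lt_of_SPDA_eq_some {j m : I} {c : C} (hprio : Function.Injective (prio c))
    (hj : RejectedBy S R prio j c) (hm : SPDA S R prio m = some c) : prio c j < prio c m := by
  have hm' : m ∈ matched S R prio c := mem_filter.2 ⟨mem_univ _, hm⟩
  rw [← (proposersAbove_finalPtr_eq_matched hprio hj).1] at hm'
  exact (mem_filter.1 hm').2.2

end Proposals

section Blocking

theorem rankIn_SPDA {k : I} (hk : (R k).Nodup) :
    rankIn (R k) (SPDA S R prio k) = finalPtr S R prio k := by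
  rcases (finalPtr_le_length S R prio k).lt_or_eq with hlt | heq
  · have hsome : SPDA S R prio k = some (R k)[finalPtr S R prio k] :=
      List.getElem?_eq_getElem hlt
    rw [hsome]
    exact rankIn_of_getElem?_eq_some hk hsome
  · have hnone : SPDA S R prio k = none := List.getElem?_eq_none heq.ge
    rw [hnone, rankIn, heq]

def Blocks (ν : I → Option C) (k : I) (c : C) : Prop :=
  rankIn (R k) (some c) < rankIn (R k) (ν k) ∧ ∃ j, ν j = some c ∧ prio c j < prio c k

def improvers (ν : I → Option C) : Finset I :=
  univ.filter fun k => rankIn (R k) (ν k) < finalPtr S R prio k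

variable {S R prio}

theorem mem_of_mem_SPDA {k : I} {c : C} (h : c ∈ SPDA S R prio k) : c ∈ R k :=
  List.mem_of_getElem? h

theorem not_blocks_SPDA {k : I} {c : C} (hprio : Function.Injective (prio c))
    (hk : (R k).Nodup) : ¬ Blocks R prio (SPDA S R prio) k c := by
  rintro ⟨hlt, j, hj, hjk⟩
  rw [rankIn_SPDA S R prio hk] at hlt
  obtain ⟨c', hc', hget⟩ :=
    exists_eq_some_of_rankIn_lt_length (hlt.trans_le (finalPtr_le_length S R prio k))
  cases hc'
  exact (prio_lt_of_SPDA_eq_some hprio ⟨_, hlt, hget⟩ hj).asymm hjk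

theorem exists_rejectedBy_of_mem_improvers {ν : I → Option C} {j : I}
    (hj : j ∈ improvers S R prio ν) : ∃ c, ν j = some c ∧ RejectedBy S R prio j c := by
  have hlt := (mem_filter.1 hj).2
  obtain ⟨c, hc, hget⟩ :=
    exists_eq_some_of_rankIn_lt_length (hlt.trans_le (finalPtr_le_length S R prio j))
  exact ⟨c, hc, _, hlt, hget⟩

theorem finalPtr_le_of_not_mem_improvers {ν : I → Option C} {k : I}
    (hk : k ∉ improvers S R prio ν) : finalPtr S R prio k ≤ rankIn (R k) (ν k) := by
  simpa [improvers] using hk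

theorem blocks_of_SPDA_eq_some {ν : I → Option C} {j k : I} {c : C}
    (hprio : Function.Injective (prio c)) (hnd : (R k).Nodup) (hj : RejectedBy S R prio j c)
    (hνj : ν j = some c) (hμk : SPDA S R prio k = some c) (hk : k ∉ improvers S R prio ν)
    (hνk : ν k ≠ some c) : Blocks R prio ν k c := by
  refine ⟨?_, j, hνj, prio_lt_of_SPDA_eq_some hprio hj hμk⟩
  have hrank : rankIn (R k) (some c) = finalPtr S R prio k := by
    rw [← hμk, rankIn_SPDA S R prio hnd]
  exact (hrank ▸ finalPtr_le_of_not_mem_improvers hk).lt_of_ne fun h =>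
    hνk (eq_some_of_rankIn_eq (mem_of_mem_SPDA hμk) h.symm)

/-- The seats `ν` gives to improvers are full under SPDA; if the outsiders holding them under SPDA
keep them under `ν`, counting shows these seats also hold all improvers under SPDA. -/
theorem SPDA_mem_image_improvers {ν : I → Option C} (hprio : ∀ c, Function.Injective (prio c))
    (hν : ∀ c, #{j | ν j = some c} ≤ S c)
    (hkeep : ∀ j ∈ improvers S R prio ν, ∀ k ∉ improvers S R prio ν,
      SPDA S R prio k = ν j → ν k = ν j) {k : I} (hk : k ∈ improvers S R prio ν) :
    SPDA S R prio k ∈ (improvers S R prio ν).image ν := by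
  set D := improvers S R prio ν
  have hfiber : ∀ o ∈ D.image ν, #{j | ν j = o} ≤ #{j | SPDA S R prio j = o} := by
    intro o ho
    obtain ⟨j, hj, rfl⟩ := mem_image.1 ho
    obtain ⟨c, hc, hrej⟩ := exists_rejectedBy_of_mem_improvers hj
    rw [hc]
    exact (hν c).trans (card_matched_eq (hprio c) hrej).ge
  have hsub : D ⊆ univ.filter fun j => SPDA S R prio j ∈ D.image ν := by
    refine subset_of_card_le_of_sdiff_subset (B := {j | ν j ∈ D.image ν})
      (fun j hj => mem_filter.2 ⟨mem_univ _, mem_image_of_mem ν hj⟩)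
      (card_filter_mem_le_of_card_fiber_le hfiber) fun m hm => ?_
    obtain ⟨hmμ, hmD⟩ := mem_sdiff.1 hm
    obtain ⟨j, hj, hjm⟩ := mem_image.1 (mem_filter.1 hmμ).2
    refine mem_sdiff.2 ⟨mem_filter.2 ⟨mem_univ _, ?_⟩, hmD⟩
    rw [hkeep j hj m hmD hjm.symm]
    exact mem_image_of_mem ν hj
  exact (mem_filter.1 (hsub hk)).2

/-- Look at the improver `k` who reaches her final SPDA seat last. That seat was earlier refused to
the improver `j` who gets it under `ν`, so when `k` arrives the seat overflows above `j`, and the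
student pushed out, being no improver, blocks `ν` together with `j`. -/
theorem exists_blocks_of_SPDA_mem_image {ν : I → Option C}
    (hprio : ∀ c, Function.Injective (prio c)) (hnd : ∀ k, (R k).Nodup)
    (hne : (improvers S R prio ν).Nonempty)
    (hcover : ∀ k ∈ improvers S R prio ν, SPDA S R prio k ∈ (improvers S R prio ν).image ν) :
    ∃ k ∉ improvers S R prio ν, ∃ c, Blocks R prio ν k c := by
  set D := improvers S R prio ν
  obtain ⟨k, hk, hlast⟩ := D.exists_max_image (arrival S R prio) hne
  obtain ⟨j, hj, hjk⟩ := mem_image.1 (hcover k hk)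
  obtain ⟨c, hνj, q, hq, hqc⟩ := exists_rejectedBy_of_mem_improvers hj
  obtain ⟨r, rfl, hrej⟩ := exists_isRejected_of_lt_finalPtr S R prio hq
  obtain ⟨t, ht⟩ := Nat.exists_eq_add_of_lt
    (((lt_arrival_iff S R prio).2 hq).trans_le (hlast j hj))
  have hT : ptr S R prio (arrival S R prio k) = daStep S R prio (ptr S R prio (r + t)) := by
    rw [ht, ptr_succ]
  have hkc : proposesTo R (ptr S R prio (arrival S R prio k)) k = some c := by
    rw [proposesTo, ptr_arrival]
    exact hjk.symm.trans hνj
  have hmoved : ptr S R prio (r + t) k < ptr S R prio (arrival S R prio k) k := by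
    rw [ptr_arrival]
    exact (lt_arrival_iff S R prio).1 (by omega)
  have hstay : ¬ isRejected S R prio (ptr S R prio (arrival S R prio k)) k := fun h =>
    (ptr_lt_finalPtr_of_isRejected S R prio h).ne (ptr_arrival S R prio k)
  have hfull := le_card_proposersAbove_ptr (hprio c) (Nat.le_add_right r t)
    ((isRejected_iff hqc).1 hrej)
  rw [hT] at hkc hmoved hstay
  obtain ⟨m, hm, hmrej⟩ := exists_isRejected_of_newcomer (hprio c) hfull hkc hmoved.ne' hstay
  rw [← hT] at hm hmrej
  obtain ⟨-, hmc, hjm⟩ := mem_filter.1 hm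
  have hmD : m ∉ D := fun h => (lt_arrival_iff S R prio).2
    (ptr_lt_finalPtr_of_isRejected S R prio hmrej) |>.not_ge (hlast m h)
  refine ⟨m, hmD, c, ?_, j, hνj, hjm⟩
  rw [rankIn_of_getElem?_eq_some (hnd m) hmc]
  exact (ptr_lt_finalPtr_of_isRejected S R prio hmrej).trans_le
    (finalPtr_le_of_not_mem_improvers hmD)

/-- The blocking lemma of Gale and Sotomayor. -/
theorem exists_blocks_of_mem_improvers {ν : I → Option C}
    (hprio : ∀ c, Function.Injective (prio c)) (hnd : ∀ k, (R k).Nodup)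
    (hν : ∀ c, #{j | ν j = some c} ≤ S c) {i : I} (hi : i ∈ improvers S R prio ν) :
    ∃ k ∉ improvers S R prio ν, ∃ c, Blocks R prio ν k c := by
  by_cases hswap : ∃ j ∈ improvers S R prio ν, ∃ k ∉ improvers S R prio ν,
      SPDA S R prio k = ν j ∧ ν k ≠ ν j
  · obtain ⟨j, hj, k, hk, hμk, hνk⟩ := hswap
    obtain ⟨c, hνj, hrej⟩ := exists_rejectedBy_of_mem_improvers hj
    rw [hνj] at hμk hνk
    exact ⟨k, hk, c, blocks_of_SPDA_eq_some (hprio c) (hnd k) hrej hνj hμk hk hνk⟩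
  · push Not at hswap
    exact exists_blocks_of_SPDA_mem_image hprio hnd ⟨i, hi⟩
      fun k hk => SPDA_mem_image_improvers hprio hν hswap hk

theorem rankIn_SPDA_le_rankIn_SPDA {Q Q' : I → List C} (hprio : ∀ c, Function.Injective (prio c))
    (hnd : ∀ k, (Q k).Nodup) (hnd' : ∀ k, (Q' k).Nodup) {i : I} (hQ : ∀ k ≠ i, Q k = Q' k) :
    rankIn (Q i) (SPDA S Q prio i) ≤ rankIn (Q i) (SPDA S Q' prio i) := by
  rw [rankIn_SPDA S Q prio (hnd i)]
  by_contra! hi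
  have hiD : i ∈ improvers S Q prio (SPDA S Q' prio) := mem_filter.2 ⟨mem_univ _, hi⟩
  obtain ⟨k, hk, c, hrank, hj⟩ := exists_blocks_of_mem_improvers hprio hnd
    (fun c => card_matched_le (S := S) (R := Q') (hprio c)) hiD
  have hki : k ≠ i := by rintro rfl; exact hk hiD
  rw [hQ k hki] at hrank
  exact not_blocks_SPDA (hprio c) (hnd' k) ⟨hrank, hj⟩

end Blocking

end DeferredAcceptance

section SubROL

variable {C : Type} [DecidableEq C]

theorem fst_eq_of_mem_subROL_block {T : Finset C} {c : C} {x : C × Bool}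
    (hx : x ∈ (if c ∈ T then [(c, false), (c, true)] else [(c, false)])) : x.1 = c := by
  split_ifs at hx <;> aesop

theorem nodup_subROL {L : List C} (hL : L.Nodup) (T : Finset C) : (subROL L T).Nodup := by
  refine List.nodup_flatMap.2 ⟨fun c _ => by split_ifs <;> simp, hL.imp fun hne x hxa hxb => ?_⟩
  exact hne ((fst_eq_of_mem_subROL_block hxa).symm.trans (fst_eq_of_mem_subROL_block hxb))

theorem pairwise_subROL {r : C → C → Prop} (hr : ∀ c, r c c) {L : List C} (hL : L.Pairwise r)
    (T : Finset C) : (subROL L T).Pairwise fun x y => r x.1 y.1 := by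
  refine List.pairwise_flatMap.2 ⟨fun c _ => ?_, hL.imp fun hab x hx y hy => ?_⟩
  · split_ifs <;> simp [hr]
  · rwa [fst_eq_of_mem_subROL_block hx, fst_eq_of_mem_subROL_block hy]

end SubROL

theorem injective_subPrio {I C : Type} {e w : I → C → ℝ}
    (he : ∀ c : C, Function.Injective fun i : I => e i c)
    (hw : ∀ c : C, Function.Injective fun i : I => w i c) :
    ∀ s, Function.Injective (subPrio e w s)
  | (c, false) => he c
  | (c, true) => hw c

open DeferredAcceptance in
theorem DAVIDQ_ordinally_strategyproof_general
    {I C : Type} [Fintype I] [DecidableEq I] [DecidableEq C]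
    (Sr Sd : C → ℕ) (e w : I → C → ℝ)
    (he : ∀ c : C, Function.Injective fun i : I => e i c)
    (hw : ∀ c : C, Function.Injective fun i : I => w i c)
    (i : I) (u : Option C → ℝ)
    (R : I → List (C × Bool)) (hR : ∀ j : I, (R j).Nodup)
    (Ltrue : List C) (hLtrue : IsTruthfulROL u Ltrue)
    (T : Finset C)
    (L : List (C × Bool)) (hL : L.Perm (subROL Ltrue T)) :
    u (Option.map Prod.fst
        (SPDA (subCap Sr Sd) (Function.update R i L) (subPrio e w) i)) ≤
      u (Option.map Prod.fst
        (SPDA (subCap Sr Sd) (Function.update R i (subROL Ltrue T)) (subPrio e w) i)) := by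
  have hprio := injective_subPrio he hw
  have htrue : (subROL Ltrue T).Nodup :=
    nodup_subROL (hLtrue.2.imp fun h hab => by subst hab; exact lt_irrefl _ h) T
  have hnd (l : List (C × Bool)) (hl : l.Nodup) (j : I) : (Function.update R i l j).Nodup := by
    rcases eq_or_ne j i with rfl | hj
    · simpa using hl
    · simpa [hj] using hR j
  have hagree (j : I) (hj : j ≠ i) :
      Function.update R i (subROL Ltrue T) j = Function.update R i L j := by
    simp [hj]
  have htruthful := rankIn_SPDA_le_rankIn_SPDA (S := subCap Sr Sd) hprio (hnd _ htrue)
    (hnd _ (hL.nodup_iff.2 htrue)) hagree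
  have hmisreport := rankIn_SPDA_le_rankIn_SPDA (S := subCap Sr Sd) hprio
    (hnd _ (hL.nodup_iff.2 htrue)) (hnd _ htrue) fun j hj => (hagree j hj).symm
  simp only [Function.update_self] at htruthful hmisreport
  exact le_of_rankIn_le_of_perm (v := fun o => u (Option.map Prod.fst o)) hL
    (pairwise_subROL (r := fun a b => u (some b) ≤ u (some a)) (fun _ => le_rfl)
      (hLtrue.2.imp le_of_lt) T)
    (fun a ha => by simpa using mem_of_mem_SPDA ha) (fun a ha => by simpa using mem_of_mem_SPDA ha)
    htruthful hmisreport

/-- **DAVID-Q is ordinally strategy-proof**: for every student `i`, every profile of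
sub-college rank-ordered lists of the other students, and every set `T ⊆ C` of colleges
whose disclosure sub-colleges `i` includes, the outcome `i` receives from submitting the
sub-college list `subROL Ltrue T` — the regular sub-colleges of all colleges in the
order of her true preferences `u`, with each disclosure sub-college of a `c ∈ T` placed
immediately after `c`'s regular sub-college — is weakly preferred, under her true
preferences, to her outcome from submitting any other rank-ordered list `L` of the same
set of sub-colleges in a different order (i.e. any permutation of `subROL Ltrue T`). -/
theorem DAVIDQ_ordinally_strategyproof
    {I C : Type} [Fintype I] [DecidableEq I] [DecidableEq C] [Fintype C]
    (Sr Sd : C → ℕ) (e w : I → C → ℝ)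
    (he : ∀ c : C, Function.Injective fun i : I => e i c)
    (hw : ∀ c : C, Function.Injective fun i : I => w i c)
    (i : I) (u : Option C → ℝ) (hu : Function.Injective u)
    (R : I → List (C × Bool)) (hR : ∀ j : I, (R j).Nodup)
    (Ltrue : List C) (hLtrue : IsTruthfulROL u Ltrue)
    (T : Finset C)
    (L : List (C × Bool)) (hL : L.Perm (subROL Ltrue T)) :
    u (Option.map Prod.fst
        (SPDA (subCap Sr Sd) (Function.update R i L) (subPrio e w) i)) ≤
      u (Option.map Prod.fst
        (SPDA (subCap Sr Sd) (Function.update R i (subROL Ltrue T)) (subPrio e w) i)) :=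
  DAVIDQ_ordinally_strategyproof_general Sr Sd e w he hw i u R hR Ltrue hLtrue T L hL

end
end

section
/- DAVID-U is not disclosure safe: there exists a finite college-admissions market, a student i with a rank-ordered list L, a target set x ⊆ C, a college c ∉ x, and a profile of rank-ordered lists and target sets of the other students, such that the outcome i is matched to by SPDA when she submits (L, x ∪ {c}) is strictly less preferred, under her true preferences, than the outcome she is matched to when she submits (L, x). -/
open scoped Classical

noncomputable section

/-- The DAVID-U priority of student `j` at college `c`, given the target sets `x`:
the payoff `w j c` if `j` targets `c`, and the expected payoff `Ew j c` otherwise. -/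
def davidUPrio {I C : Type} [DecidableEq C] (w Ew : I → C → ℝ)
    (x : I → Finset C) : C → I → ℝ :=
  fun c j => if c ∈ x j then w j c else Ew j c

def myS : Fin 1 → ℕ := fun _ => 1
def myR : Fin 2 → List (Fin 1) := fun _ => [0]
def prio1 : Fin 1 → Fin 2 → ℝ := fun _ j => if j = 0 then 2 else 1
def prio2 : Fin 1 → Fin 2 → ℝ := fun _ j => if j = 0 then 0 else 1

lemma mem_filter' {α : Type*} {p : α → Prop} {D : DecidablePred p} {s : Finset α} {a : α} :
    a ∈ @Finset.filter _ p D s ↔ a ∈ s ∧ p a := @Finset.mem_filter _ _ D _ _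

lemma fin2_cases (j : Fin 2) : j = 0 ∨ j = 1 := by omega

lemma prop_zero (j : Fin 2) : proposesTo myR (fun _ => 0) j = some 0 := by
  simp [proposesTo, myR]

lemma round1_prio1 : daStep myS myR prio1 (fun _ => 0) = fun j => if j = 0 then 0 else 1 := by
  funext j
  rcases fin2_cases j with rfl | rfl
  · have hnr : ¬ isRejected myS myR prio1 (fun _ => 0) 0 := by
      rintro ⟨c, hc, hcard⟩
      have hc0 : c = 0 := Subsingleton.elim _ _
      subst hc0
      obtain ⟨j, hj⟩ := Finset.card_pos.mp (lt_of_lt_of_le one_pos hcard)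
      have hj := mem_filter'.mp hj
      rcases fin2_cases j with rfl | rfl
      · have := hj.2.2; norm_num [prio1] at this
      · have := hj.2.2; norm_num [prio1] at this
    simp [daStep, hnr]
  · have hr : isRejected myS myR prio1 (fun _ => 0) 1 := by
      refine ⟨0, prop_zero 1, ?_⟩
      show 1 ≤ _
      refine Finset.card_pos.mpr ⟨0, mem_filter'.mpr ⟨Finset.mem_univ _, prop_zero 0, ?_⟩⟩
      show prio1 0 1 < prio1 0 0
      norm_num [prio1]
    simp [daStep, hr]

lemma fixed_prio1 : daStep myS myR prio1 (fun j => if j = 0 then 0 else 1) =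
    fun j => if j = 0 then 0 else 1 := by
  funext j
  rcases fin2_cases j with rfl | rfl
  · have hnr : ¬ isRejected myS myR prio1 (fun j : Fin 2 => if j = 0 then 0 else 1) 0 := by
      rintro ⟨c, hc, hcard⟩
      have hc0 : c = 0 := Subsingleton.elim _ _
      subst hc0
      obtain ⟨j, hj⟩ := Finset.card_pos.mp (lt_of_lt_of_le one_pos hcard)
      have hj := mem_filter'.mp hj
      rcases fin2_cases j with rfl | rfl
      · have := hj.2.2; norm_num [prio1] at this
      · have := hj.2.1; simp [proposesTo, myR] at this
    simp [daStep, hnr]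
  · have hnr : ¬ isRejected myS myR prio1 (fun j : Fin 2 => if j = 0 then 0 else 1) 1 := by
      rintro ⟨c, hc, hcard⟩
      simp [proposesTo, myR] at hc
    simp [daStep, hnr]

lemma SPDA1 : SPDA myS myR prio1 0 = some 0 := by
  have hsum : (∑ i : Fin 2, ((myR i).length + 1)) = 4 := by simp [myR]
  unfold SPDA
  rw [hsum, show (4 : ℕ) = 3 + 1 from rfl, Function.iterate_succ_apply, round1_prio1,
    Function.iterate_fixed fixed_prio1]
  simp [proposesTo, myR]

lemma round1_prio2 : daStep myS myR prio2 (fun _ => 0) = fun j => if j = 0 then 1 else 0 := by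
  funext j
  rcases fin2_cases j with rfl | rfl
  · have hr : isRejected myS myR prio2 (fun _ => 0) 0 := by
      refine ⟨0, prop_zero 0, ?_⟩
      show 1 ≤ _
      refine Finset.card_pos.mpr ⟨1, mem_filter'.mpr ⟨Finset.mem_univ _, prop_zero 1, ?_⟩⟩
      show prio2 0 0 < prio2 0 1
      norm_num [prio2]
    simp [daStep, hr]
  · have hnr : ¬ isRejected myS myR prio2 (fun _ => 0) 1 := by
      rintro ⟨c, hc, hcard⟩
      have hc0 : c = 0 := Subsingleton.elim _ _
      subst hc0
      obtain ⟨j, hj⟩ := Finset.card_pos.mp (lt_of_lt_of_le one_pos hcard)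
      have hj := mem_filter'.mp hj
      rcases fin2_cases j with rfl | rfl
      · have := hj.2.2; norm_num [prio2] at this
      · have := hj.2.2; norm_num [prio2] at this
    simp [daStep, hnr]

lemma fixed_prio2 : daStep myS myR prio2 (fun j => if j = 0 then 1 else 0) =
    fun j => if j = 0 then 1 else 0 := by
  funext j
  rcases fin2_cases j with rfl | rfl
  · have hnr : ¬ isRejected myS myR prio2 (fun j : Fin 2 => if j = 0 then 1 else 0) 0 := by
      rintro ⟨c, hc, hcard⟩
      simp [proposesTo, myR] at hc
    simp [daStep, hnr]
  · have hnr : ¬ isRejected myS myR prio2 (fun j : Fin 2 => if j = 0 then 1 else 0) 1 := by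
      rintro ⟨c, hc, hcard⟩
      have hc0 : c = 0 := Subsingleton.elim _ _
      subst hc0
      obtain ⟨j, hj⟩ := Finset.card_pos.mp (lt_of_lt_of_le one_pos hcard)
      have hj := mem_filter'.mp hj
      rcases fin2_cases j with rfl | rfl
      · have := hj.2.1; simp [proposesTo, myR] at this
      · have := hj.2.2; norm_num [prio2] at this
    simp [daStep, hnr]

lemma SPDA2 : SPDA myS myR prio2 0 = none := by
  have hsum : (∑ i : Fin 2, ((myR i).length + 1)) = 4 := by simp [myR]
  unfold SPDA
  rw [hsum, show (4 : ℕ) = 3 + 1 from rfl, Function.iterate_succ_apply, round1_prio2,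
    Function.iterate_fixed fixed_prio2]
  simp [proposesTo, myR]


lemma hprio1 (c' : Fin 1) :
    (fun j : Fin 2 => davidUPrio (fun j _ => if j = 0 then (0:ℝ) else 37)
      (fun j _ => if j = 0 then (2:ℝ) else 1) (fun _ => ∅) c' j) = prio1 c' := by
  funext j
  rcases fin2_cases j with rfl | rfl <;> simp [davidUPrio, prio1]

lemma hprio2 (c' : Fin 1) :
    (fun j : Fin 2 => davidUPrio (fun j _ => if j = 0 then (0:ℝ) else 37)
      (fun j _ => if j = 0 then (2:ℝ) else 1)
      (Function.update (fun _ => ∅) (0 : Fin 2) (insert (0 : Fin 1) (∅ : Finset (Fin 1)))) c' j)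
      = prio2 c' := by
  funext j
  have hc : c' = 0 := Subsingleton.elim _ _
  rcases fin2_cases j with rfl | rfl <;>
    simp [davidUPrio, prio2, Function.update, hc]

/-- **DAVID-U is not disclosure safe**: there exists a finite college-admissions market
(students `Fin n`, colleges `Fin m`, capacities `S`, payoffs `w`, expected payoffs `Ew`,
with all resulting priority scores at each college distinct under both target profiles),
a student `i` with rank-ordered list `R i`, a target set `x i`, a college `c ∉ x i`, and
a profile of rank-ordered lists and target sets of the other students, such that the
outcome `i` is matched to by SPDA when she additionally targets `c` is strictly less
preferred, under her true preferences `u`, than the outcome she is matched to when she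
submits the target set `x i`. -/
theorem DAVIDU_not_disclosure_safe :
    ∃ (n m : ℕ) (S : Fin m → ℕ) (w Ew : Fin n → Fin m → ℝ)
      (x : Fin n → Finset (Fin m)) (R : Fin n → List (Fin m))
      (i : Fin n) (u : Option (Fin m) → ℝ) (c : Fin m),
      Function.Injective u ∧
      (∀ j : Fin n, (R j).Nodup) ∧
      c ∉ x i ∧
      (∀ c' : Fin m, Function.Injective fun j : Fin n => davidUPrio w Ew x c' j) ∧
      (∀ c' : Fin m, Function.Injective fun j : Fin n =>
        davidUPrio w Ew (Function.update x i (insert c (x i))) c' j) ∧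
      u (SPDA S R (davidUPrio w Ew (Function.update x i (insert c (x i)))) i) <
        u (SPDA S R (davidUPrio w Ew x) i) := by
  refine ⟨2, 1, myS,
    (fun j _ => if j = 0 then 0 else 37),
    (fun j _ => if j = 0 then 2 else 1),
    (fun _ => ∅), myR, 0,
    (fun o => if o = some 0 then 1 else 0), 0, ?_, ?_, ?_, ?_, ?_, ?_⟩
  · intro a b h
    rcases a with _ | a <;> rcases b with _ | b
    · rfl
    · exfalso; simp [Fin.fin_one_eq_zero b] at h
    · exfalso; simp [Fin.fin_one_eq_zero a] at h
    · exact congrArg some (Subsingleton.elim a b)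
  · intro j; simp [myR]
  · simp
  · intro c'
    rw [hprio1]
    intro a b h
    rcases fin2_cases a with rfl | rfl <;> rcases fin2_cases b with rfl | rfl <;>
      first | rfl | (exfalso; norm_num [prio1] at h)
  · intro c'
    rw [hprio2]
    intro a b h
    rcases fin2_cases a with rfl | rfl <;> rcases fin2_cases b with rfl | rfl <;>
      first | rfl | (exfalso; norm_num [prio2] at h)
  · have e1 : (davidUPrio (fun j _ => if j = 0 then (0:ℝ) else 37)
        (fun j _ => if j = 0 then (2:ℝ) else 1) (fun _ => ∅)) = prio1 :=
      funext fun c' => hprio1 c'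
    have e2 : (davidUPrio (fun j _ => if j = 0 then (0:ℝ) else 37)
        (fun j _ => if j = 0 then (2:ℝ) else 1)
        (Function.update (fun _ => ∅) (0 : Fin 2) (insert (0 : Fin 1) (∅ : Finset (Fin 1)))))
        = prio2 := funext fun c' => hprio2 c'
    simp only [e1, e2, SPDA1, SPDA2, reduceCtorEq, if_false, if_neg]
    norm_num

end
end

section
/- Individual DAVID-U demand satisfies gross substitutes: for every type θ, every college c ∈ C, every college c' ≠ c, and all cutoff vectors Π, Π' ∈ (ℝ ∪ {−∞})^C with Π'_{c'} ≥ Π_{c'} and Π'_{c''} = Π_{c''} for all c'' ≠ c', it holds that D_{θ,c}(Π') ≥ D_{θ,c}(Π). -/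
open scoped Classical ENNReal

noncomputable section

/-! The DAVID-U demand framework.  `C` is a finite set of colleges, `γ ≥ 0` an
application cost.  A student type specifies, for each college `c`, her utility `v c`,
the expected payoff `Ew c` conditional on her eligibility score, and the payoff `w c`.
Cutoffs live in `WithBot ℝ = ℝ ∪ {−∞}`. -/

/-- The indicator `ε̂_{c,c'}(P)`: no better option at `c'` without disclosing to `c`. -/
def ehat {C : Type} (γ : ℝ) (v Ew w : C → ℝ) (P : C → WithBot ℝ) (c c' : C) : ℝ :=
  if (v c' < v c) ∨ ((Ew c' : WithBot ℝ) < P c' ∧ (w c' : WithBot ℝ) < P c')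
      ∨ ((Ew c' : WithBot ℝ) < P c' ∧ v c' - γ < v c) then 1 else 0

/-- The indicator `σ̂_{c,c'}(P)`: no better option at `c'` when disclosing to `c`. -/
def shat {C : Type} (γ : ℝ) (v Ew w : C → ℝ) (P : C → WithBot ℝ) (c c' : C) : ℝ :=
  if (v c' < v c - γ) ∨ ((Ew c' : WithBot ℝ) < P c' ∧ (w c' : WithBot ℝ) < P c')
      ∨ ((Ew c' : WithBot ℝ) < P c' ∧ v c' < v c) then 1 else 0

/-- `ε_{θ,c}(P)`: demand for college `c` without disclosure. -/
def epsD {C : Type} [Fintype C] (γ : ℝ) (v Ew w : C → ℝ)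
    (P : C → WithBot ℝ) (c : C) : ℝ :=
  (if 0 < v c then 1 else 0) * (if P c < (Ew c : WithBot ℝ) then 1 else 0) *
    ∏ c' ∈ Finset.univ.erase c, ehat γ v Ew w P c c'

/-- `σ_{θ,c}(P)`: demand for college `c` with disclosure. -/
def sigD {C : Type} [Fintype C] (γ : ℝ) (v Ew w : C → ℝ)
    (P : C → WithBot ℝ) (c : C) : ℝ :=
  (if γ < v c then 1 else 0) * (if (Ew c : WithBot ℝ) < P c then 1 else 0) *
    (if P c < (w c : WithBot ℝ) then 1 else 0) *
    ∏ c' ∈ Finset.univ.erase c, shat γ v Ew w P c c'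

/-- The individual demand `D_{θ,c}(P) = ε_{θ,c}(P) + σ_{θ,c}(P)` of a type
`θ = (v, Ew, w)` for college `c` at cutoffs `P`. -/
def demandD {C : Type} [Fintype C] (γ : ℝ) (v Ew w : C → ℝ)
    (P : C → WithBot ℝ) (c : C) : ℝ :=
  epsD γ v Ew w P c + sigD γ v Ew w P c


lemma ehat_mono {C : Type} (γ : ℝ) (v Ew w : C → ℝ) (P Q : C → WithBot ℝ)
    (c c' : C) (h : P c' ≤ Q c') :
    ehat γ v Ew w P c c' ≤ ehat γ v Ew w Q c c' := by
  unfold ehat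
  by_cases h1 : (v c' < v c) ∨ ((Ew c' : WithBot ℝ) < P c' ∧ (w c' : WithBot ℝ) < P c')
      ∨ ((Ew c' : WithBot ℝ) < P c' ∧ v c' - γ < v c)
  · have h2 : (v c' < v c) ∨ ((Ew c' : WithBot ℝ) < Q c' ∧ (w c' : WithBot ℝ) < Q c')
        ∨ ((Ew c' : WithBot ℝ) < Q c' ∧ v c' - γ < v c) := by
      rcases h1 with h1 | ⟨ha, hb⟩ | ⟨ha, hb⟩
      · exact Or.inl h1
      · exact Or.inr (Or.inl ⟨lt_of_lt_of_le ha h, lt_of_lt_of_le hb h⟩)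
      · exact Or.inr (Or.inr ⟨lt_of_lt_of_le ha h, hb⟩)
    simp [h1, h2]
  · simp only [h1, if_false]
    split_ifs <;> norm_num

lemma shat_mono {C : Type} (γ : ℝ) (v Ew w : C → ℝ) (P Q : C → WithBot ℝ)
    (c c' : C) (h : P c' ≤ Q c') :
    shat γ v Ew w P c c' ≤ shat γ v Ew w Q c c' := by
  unfold shat
  by_cases h1 : (v c' < v c - γ) ∨ ((Ew c' : WithBot ℝ) < P c' ∧ (w c' : WithBot ℝ) < P c')
      ∨ ((Ew c' : WithBot ℝ) < P c' ∧ v c' < v c)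
  · have h2 : (v c' < v c - γ) ∨ ((Ew c' : WithBot ℝ) < Q c' ∧ (w c' : WithBot ℝ) < Q c')
        ∨ ((Ew c' : WithBot ℝ) < Q c' ∧ v c' < v c) := by
      rcases h1 with h1 | ⟨ha, hb⟩ | ⟨ha, hb⟩
      · exact Or.inl h1
      · exact Or.inr (Or.inl ⟨lt_of_lt_of_le ha h, lt_of_lt_of_le hb h⟩)
      · exact Or.inr (Or.inr ⟨lt_of_lt_of_le ha h, hb⟩)
    simp [h1, h2]
  · simp only [h1, if_false]
    split_ifs <;> norm_num

lemma ehat_nonneg {C : Type} (γ : ℝ) (v Ew w : C → ℝ) (P : C → WithBot ℝ)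
    (c c' : C) : 0 ≤ ehat γ v Ew w P c c' := by
  unfold ehat; split_ifs <;> norm_num

lemma shat_nonneg {C : Type} (γ : ℝ) (v Ew w : C → ℝ) (P : C → WithBot ℝ)
    (c c' : C) : 0 ≤ shat γ v Ew w P c c' := by
  unfold shat; split_ifs <;> norm_num

/-- **Individual DAVID-U demand satisfies gross substitutes**: for every type
`θ = (v, Ew, w)`, every college `c`, every college `c' ≠ c`, and all cutoff vectors
`P, P'` with `P' c' ≥ P c'` and `P' c'' = P c''` for all `c'' ≠ c'`, we have
`D_{θ,c}(P') ≥ D_{θ,c}(P)`. -/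
theorem individual_demand_gross_substitutes
    {C : Type} [Fintype C] (γ : ℝ) (hγ : 0 ≤ γ) (v Ew w : C → ℝ)
    (c c' : C) (hne : c' ≠ c)
    (P P' : C → WithBot ℝ) (hc' : P c' ≤ P' c')
    (hoth : ∀ c'' : C, c'' ≠ c' → P' c'' = P c'') :
    demandD γ v Ew w P c ≤ demandD γ v Ew w P' c := by
  have hcc : P' c = P c := hoth c hne.symm
  have hprodE : ∏ c'' ∈ Finset.univ.erase c, ehat γ v Ew w P c c''
      ≤ ∏ c'' ∈ Finset.univ.erase c, ehat γ v Ew w P' c c'' := by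
    apply Finset.prod_le_prod
    · intro i _; exact ehat_nonneg γ v Ew w P c i
    · intro i _
      by_cases hi : i = c'
      · subst hi; exact ehat_mono γ v Ew w P P' c i hc'
      · have : P' i = P i := hoth i hi
        unfold ehat; rw [this]
  have hprodS : ∏ c'' ∈ Finset.univ.erase c, shat γ v Ew w P c c''
      ≤ ∏ c'' ∈ Finset.univ.erase c, shat γ v Ew w P' c c'' := by
    apply Finset.prod_le_prod
    · intro i _; exact shat_nonneg γ v Ew w P c i
    · intro i _
      by_cases hi : i = c'
      · subst hi; exact shat_mono γ v Ew w P P' c i hc'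
      · have : P' i = P i := hoth i hi
        unfold shat; rw [this]
  unfold demandD epsD sigD
  rw [hcc]
  gcongr <;> positivity
end
end

section
/- Non-existence of equilibrium in a finite DAVID-U economy (Example 2): let γ > 0 and let reals v₁, v₂, e₁, e₂, w₁, w₂ satisfy v₁ > γ, v₂ > γ, e₁ > e₂ > 0, w₁ > w₂ > 0, and w₂ > e₁. Consider the two-player game in which each student i ∈ {1,2} chooses an action t_i ∈ {0,1} (targeting the single college or not); student i's priority is w_i if t_i = 1 and e_i if t_i = 0; the student with the strictly higher priority is admitted to the college's single seat; student i's payoff is v_i − γ·t_i if admitted and −γ·t_i otherwise. Then this game has no pure-strategy Nash equilibrium: for every action profile (t₁, t₂) ∈ {0,1}², some student can strictly increase her payoff by unilaterally changing her action. -/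
/-!
Statement 17: Non-existence of a pure-strategy Nash equilibrium in a finite DAVID-U
economy (Example 2 of the paper): two students, one college with a single seat.
Student `i` chooses `tᵢ : Bool` (whether to target, i.e. disclose information to, the
college); her priority is `wᵢ` if she targets and `eᵢ` otherwise; the student with the
strictly higher priority is admitted; her payoff is `vᵢ − γ·tᵢ` if admitted and
`−γ·tᵢ` otherwise.
-/

/-- Priority of a student with payoff `w` and eligibility score `e` who targets iff `t`. -/
def examplePrio (t : Bool) (w e : ℝ) : ℝ := if t then w else e

/-- Payoff of a student who values admission at `v`, pays targeting cost `γ` if `t`,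
and is admitted iff `admitted`. -/
def examplePayoff (v γ : ℝ) (t : Bool) (admitted : Prop) [Decidable admitted] : ℝ :=
  (if admitted then v else 0) - (if t then γ else 0)

open Classical in
/-- **Example 2 — no pure-strategy Nash equilibrium**: if `γ > 0`, `v₁ > γ`, `v₂ > γ`,
`e₁ > e₂ > 0`, `w₁ > w₂ > 0` and `w₂ > e₁`, then in the two-player targeting game
(student `i` is admitted iff her priority is strictly higher than the other's), for
every action profile `(t₁, t₂)` some student can strictly increase her payoff by
unilaterally changing her action. -/
theorem example2_no_pure_nash_equilibrium
    (γ v₁ v₂ e₁ e₂ w₁ w₂ : ℝ)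
    (hγ : 0 < γ) (hv₁ : γ < v₁) (hv₂ : γ < v₂)
    (he₁₂ : e₂ < e₁) (he₂ : 0 < e₂)
    (hw₁₂ : w₂ < w₁) (hw₂ : 0 < w₂) (hw₂e₁ : e₁ < w₂) :
    ∀ t₁ t₂ : Bool,
      (∃ t₁' : Bool,
          examplePayoff v₁ γ t₁ (examplePrio t₂ w₂ e₂ < examplePrio t₁ w₁ e₁) <
            examplePayoff v₁ γ t₁' (examplePrio t₂ w₂ e₂ < examplePrio t₁' w₁ e₁)) ∨
      (∃ t₂' : Bool,
          examplePayoff v₂ γ t₂ (examplePrio t₁ w₁ e₁ < examplePrio t₂ w₂ e₂) <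
            examplePayoff v₂ γ t₂' (examplePrio t₁ w₁ e₁ < examplePrio t₂' w₂ e₂)) := by
  intro t₁ t₂
  cases t₁ <;> cases t₂
  · -- (0,0): player 2 deviates to targeting
    right; exact ⟨true, by simp [examplePayoff, examplePrio, he₁₂, hw₂e₁, not_lt.2 he₁₂.le]; linarith⟩
  · -- (0,1): player 1 deviates to targeting
    left; exact ⟨true, by simp [examplePayoff, examplePrio, hw₂e₁, hw₁₂, not_lt.2 hw₂e₁.le]; linarith⟩
  · -- (1,0): player 1 deviates to not targeting
    left; exact ⟨false, by simp [examplePayoff, examplePrio, he₁₂, show e₂ < w₁ by linarith]; linarith⟩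
  · -- (1,1): player 2 deviates to not targeting
    right; exact ⟨false, by simp [examplePayoff, examplePrio, hw₁₂, not_lt.2 hw₁₂.le, show e₂ < w₁ by linarith, not_lt.2 (show e₂ ≤ w₁ by linarith)]; linarith⟩
end
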